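/- arXiv:2601.09837 — 2 statements merged into one kernel-verified Lean document; each statement's English description precedes it below -/
import Mathlib

section
/- Let U and V be finite sets and let P_{UV} and Q_{UV} be probability mass functions on U × V such that P_{UV}(u,v) = 0 whenever Q_{UV}(u,v) = 0; denote by P_U, P_V, Q_V the corresponding marginals and Q_{U|V}(u|v) = Q_{UV}(u,v)/Q_V(v) for Q_V(v) > 0. Define T_U(u) := Σ_v P_V(v) Q_{U|V}(u|v). If T_U = P_U, then the infimum of D(π_{UV} ‖ Q_{UV}) over all probability mass functions π_{UV} on U × V with U-marginal equal to P_U and V-marginal equal to P_V equals D(P_V ‖ Q_V), and it is attained by π_{UV}(u,v) = P_V(v) · Q_{U|V}(u|v). -/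
/-!
STATEMENT 8: For pmfs `P_{UV}, Q_{UV}` on `U × V` with `P_{UV} ≪ Q_{UV}`, define
`T_U(u) := Σ_v P_V(v) Q_{U|V}(u|v)`. If `T_U = P_U`, then the infimum of `D(π_{UV} ‖ Q_{UV})`
over all pmfs `π_{UV}` with `U`-marginal `P_U` and `V`-marginal `P_V` equals `D(P_V ‖ Q_V)`,
and it is attained by `π_{UV}(u,v) = P_V(v) · Q_{U|V}(u|v)`.
-/

open scoped BigOperators

/-- `P` is a probability mass function on the finite set `Z`. -/
def IsPmf {Z : Type*} [Fintype Z] (P : Z → ℝ) : Prop :=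
  (∀ z, 0 ≤ P z) ∧ ∑ z, P z = 1

/-- Kullback–Leibler divergence (natural log, terms with `P z = 0` contribute `0`);
only meaningful when `P` is absolutely continuous w.r.t. `Q`. -/
noncomputable def klDiv {Z : Type*} [Fintype Z] (P Q : Z → ℝ) : ℝ :=
  ∑ z, if 0 < P z then P z * Real.log (P z / Q z) else 0

/-- Extended-real Kullback–Leibler divergence: equals `+∞` if `P` is not absolutely
continuous with respect to `Q`. -/
noncomputable def klDivE {Z : Type*} [Fintype Z] (P Q : Z → ℝ) : EReal :=
  if ∀ z, Q z = 0 → P z = 0 then ((klDiv P Q : ℝ) : EReal) else ⊤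

/-! Write `π* := P_V · Q_{U|V}`. For every `π` with `V`-marginal `P_V` and `π ≪ Q` the chain rule
gives `D(π ‖ Q) = D(π ‖ π*) + D(P_V ‖ Q_V)`, and `D(π ‖ π*) ≥ 0` by Gibbs' inequality, with equality
at `π = π*`. The hypothesis `T_U = P_U` says exactly that `π*` also has `U`-marginal `P_U`, so the
lower bound `D(P_V ‖ Q_V)` is attained within the constraint set. -/

section Gibbs

variable {Z : Type*} [Fintype Z]

lemma klDiv_eq_sum_mul_log {P : Z → ℝ} (hP : ∀ z, 0 ≤ P z) (Q : Z → ℝ) :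
    klDiv P Q = ∑ z, P z * Real.log (P z / Q z) := by
  refine Finset.sum_congr rfl fun z _ => ?_
  rcases (hP z).lt_or_eq with hpos | hzero
  · rw [if_pos hpos]
  · simp [← hzero]

lemma klDiv_self (P : Z → ℝ) : klDiv P P = 0 := by
  refine Finset.sum_eq_zero fun z _ => ?_
  split_ifs with h
  · simp [div_self h.ne']
  · rfl

lemma sub_le_mul_log_div {p q : ℝ} (hp : 0 < p) (hq : 0 < q) : p - q ≤ p * Real.log (p / q) := by
  have h := mul_le_mul_of_nonneg_left (Real.one_sub_inv_le_log_of_pos (div_pos hp hq)) hp.le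
  rwa [inv_div, mul_sub, mul_one, mul_div_cancel₀ q hp.ne'] at h

lemma sum_sub_sum_le_klDiv {P Q : Z → ℝ} (hP : ∀ z, 0 ≤ P z) (hQ : ∀ z, 0 ≤ Q z)
    (hPQ : ∀ z, Q z = 0 → P z = 0) : ∑ z, P z - ∑ z, Q z ≤ klDiv P Q := by
  rw [klDiv_eq_sum_mul_log hP, ← Finset.sum_sub_distrib]
  refine Finset.sum_le_sum fun z _ => ?_
  rcases (hP z).lt_or_eq with hpos | hzero
  · exact sub_le_mul_log_div hpos ((hQ z).lt_of_ne fun h => hpos.ne' (hPQ z h.symm))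
  · simp [← hzero, hQ z]

end Gibbs

section Marginal

variable {U V : Type*} [Fintype U]

def sndMarginal (π : U × V → ℝ) (v : V) : ℝ :=
  ∑ u, π (u, v)

/-- `R(v) · Q_{U|V}(u|v)`; where `Q_V(v) = 0` the division makes it `0`. -/
noncomputable def replaceSndMarginal (Q : U × V → ℝ) (R : V → ℝ) (p : U × V) : ℝ :=
  R p.2 * (Q p / sndMarginal Q p.2)

variable {π Q : U × V → ℝ} {R : V → ℝ}

lemma sndMarginal_nonneg (hπ : ∀ p, 0 ≤ π p) (v : V) : 0 ≤ sndMarginal π v :=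
  Finset.sum_nonneg fun u _ => hπ (u, v)

lemma le_sndMarginal (hπ : ∀ p, 0 ≤ π p) (p : U × V) : π p ≤ sndMarginal π p.2 :=
  Finset.single_le_sum (fun u _ => hπ (u, p.2)) (Finset.mem_univ p.1)

lemma sum_mul_sndMarginal [Fintype V] (π : U × V → ℝ) (f : V → ℝ) :
    ∑ p, π p * f p.2 = ∑ v, sndMarginal π v * f v := by
  rw [Fintype.sum_prod_type, Finset.sum_comm]
  simp only [sndMarginal, Finset.sum_mul]

lemma sum_sndMarginal [Fintype V] (π : U × V → ℝ) : ∑ v, sndMarginal π v = ∑ p, π p := by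
  simpa using (sum_mul_sndMarginal π fun _ => 1).symm

lemma sndMarginal_eq_zero_of_absCont (hQ : ∀ p, 0 ≤ Q p) (hπQ : ∀ p, Q p = 0 → π p = 0)
    {v : V} (hv : sndMarginal Q v = 0) : sndMarginal π v = 0 :=
  Finset.sum_eq_zero fun u _ =>
    hπQ _ ((Finset.sum_eq_zero_iff_of_nonneg fun u _ => hQ (u, v)).1 hv u (Finset.mem_univ u))

lemma replaceSndMarginal_nonneg (hQ : ∀ p, 0 ≤ Q p) (hR : ∀ v, 0 ≤ R v) (p : U × V) :
    0 ≤ replaceSndMarginal Q R p :=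
  mul_nonneg (hR p.2) (div_nonneg (hQ p) (sndMarginal_nonneg hQ p.2))

lemma replaceSndMarginal_eq_zero {p : U × V} (hp : Q p = 0) : replaceSndMarginal Q R p = 0 := by
  simp [replaceSndMarginal, hp]

lemma sndMarginal_replaceSndMarginal (hRQ : ∀ v, sndMarginal Q v = 0 → R v = 0) :
    sndMarginal (replaceSndMarginal Q R) = R := by
  funext v
  have h : sndMarginal (replaceSndMarginal Q R) v = R v * (sndMarginal Q v / sndMarginal Q v) := by
    simp only [sndMarginal, replaceSndMarginal, ← Finset.mul_sum, ← Finset.sum_div]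
  by_cases hv : sndMarginal Q v = 0
  · rw [h, hRQ v hv, zero_mul]
  · rw [h, div_self hv, mul_one]

lemma replaceSndMarginal_sndMarginal_pos (hπ : ∀ p, 0 ≤ π p) (hQ : ∀ p, 0 ≤ Q p)
    (hπQ : ∀ p, Q p = 0 → π p = 0) {p : U × V} (hp : 0 < π p) :
    0 < replaceSndMarginal Q (sndMarginal π) p := by
  have hQp : 0 < Q p := (hQ p).lt_of_ne fun h => hp.ne' (hπQ p h.symm)
  exact mul_pos (hp.trans_le (le_sndMarginal hπ p))
    (div_pos hQp (hQp.trans_le (le_sndMarginal hQ p)))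

variable [Fintype V]

theorem klDiv_eq_klDiv_replaceSndMarginal_add (hπ : ∀ p, 0 ≤ π p) (hQ : ∀ p, 0 ≤ Q p)
    (hπQ : ∀ p, Q p = 0 → π p = 0) :
    klDiv π Q = klDiv π (replaceSndMarginal Q (sndMarginal π)) +
      klDiv (sndMarginal π) (sndMarginal Q) := by
  have hterm : ∀ p, π p * Real.log (π p / Q p) =
      π p * Real.log (π p / replaceSndMarginal Q (sndMarginal π) p) +
        π p * Real.log (sndMarginal π p.2 / sndMarginal Q p.2) := by
    intro p
    rcases (hπ p).lt_or_eq with hpos | hzero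
    · have hQp : 0 < Q p := (hQ p).lt_of_ne fun h => hpos.ne' (hπQ p h.symm)
      have hRp := hpos.trans_le (le_sndMarginal hπ p)
      have hQVp := hQp.trans_le (le_sndMarginal hQ p)
      rw [← mul_add, ← Real.log_mul
        (div_pos hpos (replaceSndMarginal_sndMarginal_pos hπ hQ hπQ hpos)).ne'
        (div_pos hRp hQVp).ne', replaceSndMarginal]
      field_simp
    · simp [← hzero]
  rw [klDiv_eq_sum_mul_log hπ, klDiv_eq_sum_mul_log hπ,
    klDiv_eq_sum_mul_log (sndMarginal_nonneg hπ), Finset.sum_congr rfl fun p _ => hterm p,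
    Finset.sum_add_distrib,
    sum_mul_sndMarginal π fun v => Real.log (sndMarginal π v / sndMarginal Q v)]

theorem klDiv_sndMarginal_le (hπ : ∀ p, 0 ≤ π p) (hQ : ∀ p, 0 ≤ Q p)
    (hπQ : ∀ p, Q p = 0 → π p = 0) :
    klDiv (sndMarginal π) (sndMarginal Q) ≤ klDiv π Q := by
  set πs := replaceSndMarginal Q (sndMarginal π)
  have hsum : ∑ p, πs p = ∑ p, π p := by
    rw [← sum_sndMarginal,
      sndMarginal_replaceSndMarginal fun v => sndMarginal_eq_zero_of_absCont hQ hπQ, sum_sndMarginal]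
  have hππs : ∀ p, πs p = 0 → π p = 0 := fun p hp =>
    ((hπ p).lt_or_eq.resolve_left fun hpos =>
      (replaceSndMarginal_sndMarginal_pos hπ hQ hπQ hpos).ne' hp).symm
  have hgibbs := sum_sub_sum_le_klDiv hπ (replaceSndMarginal_nonneg hQ (sndMarginal_nonneg hπ)) hππs
  rw [klDiv_eq_klDiv_replaceSndMarginal_add hπ hQ hπQ]
  linarith

theorem klDivE_sndMarginal_le (hπ : ∀ p, 0 ≤ π p) (hQ : ∀ p, 0 ≤ Q p) :
    klDivE (sndMarginal π) (sndMarginal Q) ≤ klDivE π Q := by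
  unfold klDivE
  by_cases hπQ : ∀ p, Q p = 0 → π p = 0
  · rw [if_pos fun _ => sndMarginal_eq_zero_of_absCont hQ hπQ, if_pos hπQ]
    exact EReal.coe_le_coe_iff.2 (klDiv_sndMarginal_le hπ hQ hπQ)
  · rw [if_neg hπQ]
    exact le_top

theorem klDivE_replaceSndMarginal (hQ : ∀ p, 0 ≤ Q p) (hR : ∀ v, 0 ≤ R v)
    (hRQ : ∀ v, sndMarginal Q v = 0 → R v = 0) :
    klDivE (replaceSndMarginal Q R) Q = klDivE R (sndMarginal Q) := by
  have h := klDiv_eq_klDiv_replaceSndMarginal_add (replaceSndMarginal_nonneg hQ hR) hQ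
    fun _ => replaceSndMarginal_eq_zero
  rw [sndMarginal_replaceSndMarginal hRQ, klDiv_self, zero_add] at h
  unfold klDivE
  rw [if_pos fun _ => replaceSndMarginal_eq_zero, if_pos hRQ, h]

end Marginal

theorem sInf_klDiv_eq_of_TU_eq_PU {U V : Type*} [Fintype U] [Fintype V]
    (P Q : U × V → ℝ) (hP : IsPmf P) (hQ : IsPmf Q)
    (habs : ∀ p, Q p = 0 → P p = 0)
    (hTU : ∀ u, ∑ v, (∑ u', P (u', v)) * (Q (u, v) / ∑ u', Q (u', v)) = ∑ v, P (u, v)) :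
    sInf {d : EReal | ∃ π : U × V → ℝ, IsPmf π ∧
          (∀ u, ∑ v, π (u, v) = ∑ v, P (u, v)) ∧
          (∀ v, ∑ u, π (u, v) = ∑ u, P (u, v)) ∧
          d = klDivE π Q}
        = klDivE (fun v => ∑ u, P (u, v)) (fun v => ∑ u, Q (u, v)) ∧
      (IsPmf (fun p : U × V => (∑ u', P (u', p.2)) * (Q p / ∑ u', Q (u', p.2))) ∧
       (∀ u, ∑ v, (∑ u', P (u', v)) * (Q (u, v) / ∑ u', Q (u', v)) = ∑ v, P (u, v)) ∧
       (∀ v, ∑ u, (∑ u', P (u', v)) * (Q (u, v) / ∑ u', Q (u', v)) = ∑ u, P (u, v)) ∧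
       klDivE (fun p : U × V => (∑ u', P (u', p.2)) * (Q p / ∑ u', Q (u', p.2))) Q =
         klDivE (fun v => ∑ u, P (u, v)) (fun v => ∑ u, Q (u, v))) := by
  obtain ⟨hP0, hP1⟩ := hP
  have hPV : ∀ v, sndMarginal Q v = 0 → sndMarginal P v = 0 :=
    fun _ => sndMarginal_eq_zero_of_absCont hQ.1 habs
  have hπsV : sndMarginal (replaceSndMarginal Q (sndMarginal P)) = sndMarginal P :=
    sndMarginal_replaceSndMarginal hPV
  have hπs : IsPmf (replaceSndMarginal Q (sndMarginal P)) :=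
    ⟨replaceSndMarginal_nonneg hQ.1 (sndMarginal_nonneg hP0),
      by rw [← sum_sndMarginal, hπsV, sum_sndMarginal, hP1]⟩
  have hkl := klDivE_replaceSndMarginal hQ.1 (sndMarginal_nonneg hP0) hPV
  refine ⟨le_antisymm (sInf_le ⟨_, hπs, hTU, congrFun hπsV, hkl.symm⟩) (le_sInf ?_),
    hπs, hTU, congrFun hπsV, hkl⟩
  rintro d ⟨π, hπ, -, hπV, rfl⟩
  have hπP : sndMarginal π = sndMarginal P := funext hπV
  have hdpi := klDivE_sndMarginal_le hπ.1 hQ.1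
  rwa [hπP] at hdpi
end

section
/- Let α be a finite set, let P be a probability mass function on α, let n ≥ 1, let π be an empirical type with denominator n on α whose support is contained in the support of P, and let T(π) := { xⁿ ∈ αⁿ : the empirical type of xⁿ equals π } be its type class. Then for every subset A ⊆ T(π) and every c ∈ [0,1] with |A| ≥ c·|T(π)|, one has P^{⊗n}(A) ≥ c · (n+1)^{−|α|} · exp( −n·D(π ‖ P) ). -/
/-!
STATEMENT 17: For a pmf `P` on a finite set `α`, `n ≥ 1`, an empirical type `π` with
denominator `n` whose support is contained in the support of `P`, with type class
`T(π) := {xⁿ : empirical type of xⁿ = π}`: for every `A ⊆ T(π)` and `c ∈ [0,1]` with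
`|A| ≥ c·|T(π)|`, one has `P^{⊗n}(A) ≥ c · (n+1)^{-|α|} · exp(-n·D(π‖P))`.
-/

open scoped BigOperators Classical

/-- The `n`-fold product pmf on `Fin n → Z`. -/
noncomputable def prodPmf {Z : Type*} [Fintype Z] (P : Z → ℝ) (n : ℕ) : (Fin n → Z) → ℝ :=
  fun x => ∏ i, P (x i)

/-- `π` is an empirical type with denominator `n` on `Z`: a pmf all of whose values are
integer multiples of `1/n`. -/
def IsType {Z : Type*} [Fintype Z] (n : ℕ) (π : Z → ℝ) : Prop :=
  IsPmf π ∧ ∀ a, ∃ k : ℕ, π a = (k : ℝ) / n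

/-- The empirical type of the sequence `x ∈ αⁿ`. -/
noncomputable def empType {α : Type*} [Fintype α] {n : ℕ} (x : Fin n → α) : α → ℝ :=
  fun a => ((Finset.univ.filter fun i => x i = a).card : ℝ) / n

/-!
A sequence `x` of type `π` has `P^{⊗n}(x) = exp(-n D(π‖P)) · π^{⊗n}(x)`, and `π^{⊗n}` is
constant on the type class `T(π)`, so it suffices to show `π^{⊗n}(T(π)) ≥ (n+1)^{-|α|}`.
Orbit–stabiliser for permutations of the positions gives `|T(κ)| = n! / ∏ₐ κₐ!`, and with
`m! · mʲ ≤ j! · mᵐ` this makes `T(π)` the most `π^{⊗n}`-likely type class. The at most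
`(n+1)^{|α|}` type classes partition `αⁿ`, whose total `π^{⊗n}`-mass is `1`.
-/

open Finset Equiv MulAction Nat

theorem factorial_mul_pow_le_factorial_mul_pow (m j : ℕ) : m ! * m ^ j ≤ j ! * m ^ m := by
  rcases le_total m j with h | h
  · calc m ! * m ^ j = m ! * m ^ (j - m) * m ^ m := by
          rw [mul_assoc, ← pow_add, Nat.sub_add_cancel h]
      _ ≤ j ! * m ^ m := Nat.mul_le_mul_right _ (factorial_mul_pow_sub_le_factorial h)
  · calc m ! * m ^ j = j ! * m.descFactorial (m - j) * m ^ j := by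
          rw [← factorial_mul_descFactorial (Nat.sub_le m j), Nat.sub_sub_self h]
      _ ≤ j ! * m ^ (m - j) * m ^ j := by gcongr; exact descFactorial_le_pow _ _
      _ = j ! * m ^ m := by rw [mul_assoc, ← pow_add, Nat.sub_add_cancel h]

theorem mem_orbit_domMulAct_iff {ι α : Type*} [Fintype ι] [DecidableEq α] {f g : ι → α} :
    g ∈ orbit (Perm ι)ᵈᵐᵃ f ↔ ∀ a, #{i | g i = a} = #{i | f i = a} := by
  constructor
  · rintro ⟨σ, rfl⟩ a
    exact card_equiv (DomMulAct.mk.symm σ) (by simp [DomMulAct.smul_apply, Perm.smul_def])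
  · intro h
    have e : ∀ a, {i // g i = a} ≃ {i // f i = a} := fun a ↦
      Fintype.equivOfCardEq (by simp only [Fintype.card_subtype, h a])
    exact ⟨DomMulAct.mk (Equiv.ofFiberEquiv e), funext (Equiv.ofFiberEquiv_map e)⟩

theorem ncard_orbit_domMulAct_mul_prod_factorial {ι α : Type*} [Fintype ι] [DecidableEq ι]
    [Fintype α] [DecidableEq α] (f : ι → α) :
    (orbit (Perm ι)ᵈᵐᵃ f).ncard * ∏ a, (#{i | f i = a})! = (Fintype.card ι)! := by
  have hstab : Nat.card (stabilizer (Perm ι)ᵈᵐᵃ f) = ∏ a, (#{i | f i = a})! := by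
    rw [Nat.card_congr (subtypeEquiv (p := (· ∈ stabilizer (Perm ι)ᵈᵐᵃ f))
        (q := fun g : Perm ι ↦ f ∘ g = f) DomMulAct.mk.symm
        fun _ ↦ DomMulAct.mem_stabilizer_iff),
      Nat.card_eq_fintype_card, DomMulAct.stabilizer_card]
    simp only [Fintype.card_subtype]
  rw [← hstab, ← index_stabilizer, Subgroup.index_mul_card, Nat.card_congr DomMulAct.mk.symm,
    Nat.card_perm, Nat.card_eq_fintype_card]

section TypeClass

variable {α : Type*} [Fintype α] {n : ℕ}

noncomputable def symbolCount (x : Fin n → α) (a : α) : ℕ := #{i | x i = a}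

noncomputable def typeClass (x : Fin n → α) : Finset (Fin n → α) :=
  {y | symbolCount y = symbolCount x}

theorem sum_symbolCount (x : Fin n → α) : ∑ a, symbolCount x a = n := by
  simpa [symbolCount] using
    (card_eq_sum_card_fiberwise (f := x) (s := univ) (t := univ) (by simp)).symm

omit [Fintype α] in
theorem symbolCount_le (x : Fin n → α) (a : α) : symbolCount x a ≤ n :=
  (card_filter_le _ _).trans_eq (card_fin n)

theorem exists_symbolCount_eq (k : α → ℕ) (hk : ∑ a, k a = n) :
    ∃ x : Fin n → α, symbolCount x = k := by
  let e : Fin n ≃ Σ a, Fin (k a) := (Fintype.equivFinOfCardEq (by simp [hk])).symm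
  refine ⟨fun i ↦ (e i).1, funext fun a ↦ ?_⟩
  rw [symbolCount, ← Fintype.card_subtype,
    Fintype.card_congr ((e.subtypeEquivOfSubtype).trans (sigmaSubtype a)), Fintype.card_fin]

theorem empType_nonneg {x : Fin n → α} (a : α) : 0 ≤ empType x a := by
  unfold empType; positivity

theorem empType_pos_iff {x : Fin n → α} {a : α} : 0 < empType x a ↔ 0 < symbolCount x a := by
  rcases n.eq_zero_or_pos with rfl | hn
  · simp [empType, symbolCount]
  · simp [empType, symbolCount, div_pos_iff_of_pos_right (Nat.cast_pos.2 hn)]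

theorem empType_eq_empType_iff (hn : n ≠ 0) {x y : Fin n → α} :
    empType y = empType x ↔ symbolCount y = symbolCount x := by
  simp only [funext_iff, empType, symbolCount,
    div_left_inj' (Nat.cast_ne_zero.2 hn : (n : ℝ) ≠ 0), Nat.cast_inj]

theorem sum_empType (hn : n ≠ 0) (x : Fin n → α) : ∑ a, empType x a = 1 := by
  simp only [empType, ← sum_div]
  rw [div_eq_one_iff_eq (Nat.cast_ne_zero.2 hn)]
  exact_mod_cast sum_symbolCount x

theorem IsType.ne_zero {π : α → ℝ} (hπ : IsType n π) : n ≠ 0 := by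
  rintro rfl
  have hπ0 : ∀ a, π a = 0 := fun a ↦ by obtain ⟨k, hk⟩ := hπ.2 a; simpa using hk
  simpa [hπ0] using hπ.1.2

theorem IsType.exists_empType_eq {π : α → ℝ} (hπ : IsType n π) :
    ∃ x : Fin n → α, empType x = π := by
  choose k hk using hπ.2
  have hsum : ∑ a, k a = n := by
    have h := hπ.1.2
    simp only [hk, ← sum_div,
      div_eq_one_iff_eq (Nat.cast_ne_zero.2 hπ.ne_zero : (n : ℝ) ≠ 0)] at h
    exact_mod_cast h
  obtain ⟨x, hx⟩ := exists_symbolCount_eq k hsum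
  exact ⟨x, funext fun a ↦ by rw [hk, ← hx]; rfl⟩

theorem coe_typeClass (x : Fin n → α) :
    (typeClass x : Set (Fin n → α)) = orbit (Perm (Fin n))ᵈᵐᵃ x := by
  ext y
  simp [typeClass, mem_orbit_domMulAct_iff, funext_iff, symbolCount]

theorem card_typeClass_mul_prod_factorial (x : Fin n → α) :
    #(typeClass x) * ∏ a, (symbolCount x a)! = n ! := by
  have := ncard_orbit_domMulAct_mul_prod_factorial x
  rwa [Fintype.card_fin, ← coe_typeClass, Set.ncard_coe_finset] at this

theorem card_image_symbolCount_le :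
    #(univ.image (symbolCount : (Fin n → α) → α → ℕ)) ≤ (n + 1) ^ Fintype.card α := by
  calc #(univ.image (symbolCount : (Fin n → α) → α → ℕ))
      ≤ #(Fintype.piFinset fun _ : α ↦ range (n + 1)) := by
        refine card_le_card fun k hk ↦ ?_
        obtain ⟨x, -, rfl⟩ := mem_image.1 hk
        exact Fintype.mem_piFinset.2 fun a ↦ mem_range_succ_iff.2 (symbolCount_le x a)
    _ = (n + 1) ^ Fintype.card α := by simp

theorem prodPmf_nonneg {Q : α → ℝ} (hQ : ∀ a, 0 ≤ Q a) (x : Fin n → α) : 0 ≤ prodPmf Q n x :=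
  prod_nonneg fun i _ ↦ hQ (x i)

theorem prodPmf_eq_prod_pow_symbolCount (Q : α → ℝ) (x : Fin n → α) :
    prodPmf Q n x = ∏ a, Q a ^ symbolCount x a := by
  simp only [prodPmf, symbolCount, ← prod_fiberwise' univ x Q, prod_const]

theorem prodPmf_eq_of_mem_typeClass (Q : α → ℝ) {x y : Fin n → α} (hy : y ∈ typeClass x) :
    prodPmf Q n y = prodPmf Q n x := by
  rw [prodPmf_eq_prod_pow_symbolCount, prodPmf_eq_prod_pow_symbolCount, (mem_filter.1 hy).2]

theorem sum_prodPmf_of_subset_typeClass (Q : α → ℝ) {x : Fin n → α} {A : Finset (Fin n → α)}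
    (hA : A ⊆ typeClass x) : ∑ y ∈ A, prodPmf Q n y = #A * prodPmf Q n x := by
  rw [sum_congr rfl fun y hy ↦ prodPmf_eq_of_mem_typeClass Q (hA hy), sum_const, nsmul_eq_mul]

theorem sum_prodPmf {Q : α → ℝ} (hQ : ∑ a, Q a = 1) : ∑ x, prodPmf Q n x = 1 := by
  simpa [prodPmf, hQ] using (sum_pow' univ Q n).symm

theorem prodPmf_eq_exp_neg_mul_klDiv_mul {P : α → ℝ} (hP : ∀ a, 0 ≤ P a) {x : Fin n → α}
    (hsupp : ∀ a, P a = 0 → empType x a = 0) :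
    prodPmf P n x = Real.exp (-n * klDiv (empType x) P) * prodPmf (empType x) n x := by
  simp only [prodPmf_eq_prod_pow_symbolCount, klDiv, mul_sum, Real.exp_sum, ← prod_mul_distrib]
  refine prod_congr rfl fun a _ ↦ ?_
  split_ifs with ha
  · set k := symbolCount x a
    have hPa : 0 < P a := (hP a).lt_of_ne' fun h ↦ ha.ne' (hsupp a h)
    have hn : (n : ℝ) ≠ 0 :=
      Nat.cast_ne_zero.2 ((empType_pos_iff.1 ha).trans_le (symbolCount_le x a)).ne'
    have hk : (n : ℝ) * empType x a = k := mul_div_cancel₀ _ hn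
    have hlog : Real.log (empType x a / P a) = -Real.log (P a / empType x a) := by
      rw [← Real.log_inv, inv_div]
    calc P a ^ k = (P a / empType x a) ^ k * empType x a ^ k := by
          rw [← mul_pow, div_mul_cancel₀ _ ha.ne']
      _ = Real.exp (-n * (empType x a * Real.log (empType x a / P a))) * empType x a ^ k := by
          rw [← Real.exp_log (div_pos hPa ha), ← Real.exp_nat_mul, hlog, ← hk]
          ring_nf
  · have hk : symbolCount x a = 0 := by simpa [empType_pos_iff] using ha
    simp [hk]

theorem prodPmf_empType (x y : Fin n → α) :
    prodPmf (empType x) n y = (∏ a, symbolCount x a ^ symbolCount y a : ℕ) / (n : ℝ) ^ n := by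
  simp only [prodPmf_eq_prod_pow_symbolCount, empType, div_pow, prod_div_distrib,
    prod_pow_eq_pow_sum, sum_symbolCount]
  push_cast
  rfl

theorem card_typeClass_mul_prod_pow_le (x y : Fin n → α) :
    #(typeClass y) * ∏ a, symbolCount x a ^ symbolCount y a ≤
      #(typeClass x) * ∏ a, symbolCount x a ^ symbolCount x a := by
  have hfac : ∀ k l : α → ℕ,
      (∏ a, (k a)!) * ∏ a, k a ^ l a ≤ (∏ a, (l a)!) * ∏ a, k a ^ k a := by
    intro k l
    simp only [← prod_mul_distrib]
    exact prod_le_prod' fun a _ ↦ factorial_mul_pow_le_factorial_mul_pow (k a) (l a)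
  refine Nat.le_of_mul_le_mul_left ?_ (factorial_pos n)
  calc n ! * (#(typeClass y) * ∏ a, symbolCount x a ^ symbolCount y a)
      = #(typeClass x) * #(typeClass y) *
          ((∏ a, (symbolCount x a)!) * ∏ a, symbolCount x a ^ symbolCount y a) := by
        rw [← card_typeClass_mul_prod_factorial x]; ring
    _ ≤ #(typeClass x) * #(typeClass y) *
          ((∏ a, (symbolCount y a)!) * ∏ a, symbolCount x a ^ symbolCount x a) :=
        Nat.mul_le_mul_left _ (hfac _ _)
    _ = n ! * (#(typeClass x) * ∏ a, symbolCount x a ^ symbolCount x a) := by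
        rw [← card_typeClass_mul_prod_factorial y]; ring

theorem card_typeClass_mul_prodPmf_empType_le (x y : Fin n → α) :
    #(typeClass y) * prodPmf (empType x) n y ≤ #(typeClass x) * prodPmf (empType x) n x := by
  simp only [prodPmf_empType, ← mul_div_assoc]
  exact div_le_div_of_nonneg_right (by exact_mod_cast card_typeClass_mul_prod_pow_le x y)
    (by positivity)

theorem inv_pow_le_sum_typeClass_prodPmf_empType (hn : n ≠ 0) (x : Fin n → α) :
    (((n : ℝ) + 1) ^ Fintype.card α)⁻¹ ≤ ∑ y ∈ typeClass x, prodPmf (empType x) n y := by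
  set S := ∑ y ∈ typeClass x, prodPmf (empType x) n y with hS_def
  have hS : 0 ≤ S := sum_nonneg fun y _ ↦ prodPmf_nonneg empType_nonneg y
  have hfiber : ∀ k ∈ univ.image (symbolCount : (Fin n → α) → α → ℕ),
      ∑ y with symbolCount y = k, prodPmf (empType x) n y ≤ S := by
    simp only [mem_image, mem_univ, true_and, forall_exists_index]
    rintro k y rfl
    change ∑ z ∈ typeClass y, prodPmf (empType x) n z ≤ S
    rw [hS_def, sum_prodPmf_of_subset_typeClass _ subset_rfl,
      sum_prodPmf_of_subset_typeClass _ subset_rfl]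
    exact card_typeClass_mul_prodPmf_empType_le x y
  refine (inv_le_iff_one_le_mul₀' (by positivity)).2 ?_
  calc (1 : ℝ) = ∑ y, prodPmf (empType x) n y := (sum_prodPmf (sum_empType hn x)).symm
    _ = ∑ k ∈ univ.image symbolCount, ∑ y with symbolCount y = k, prodPmf (empType x) n y :=
        (sum_fiberwise_of_maps_to (fun y _ ↦ mem_image_of_mem _ (mem_univ y)) _).symm
    _ ≤ #(univ.image (symbolCount : (Fin n → α) → α → ℕ)) * S := by
        simpa using sum_le_card_nsmul _ _ _ hfiber
    _ ≤ ((n : ℝ) + 1) ^ Fintype.card α * S := by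
        gcongr
        exact_mod_cast card_image_symbolCount_le

end TypeClass

theorem prob_subset_type_class_ge_general {α : Type*} [Fintype α]
    (P : α → ℝ) (hP : IsPmf P) (n : ℕ)
    (π : α → ℝ) (hπ : IsType n π) (hsupp : ∀ a, P a = 0 → π a = 0)
    (A : Finset (Fin n → α))
    (hA : A ⊆ Finset.univ.filter (fun x : Fin n → α => empType x = π))
    (c : ℝ) (hc0 : 0 ≤ c)
    (hcard : c * ((Finset.univ.filter (fun x : Fin n → α => empType x = π)).card : ℝ)
      ≤ (A.card : ℝ)) :
    c * (((n : ℝ) + 1) ^ (Fintype.card α))⁻¹ * Real.exp (-(n : ℝ) * klDiv π P) ≤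
      ∑ x ∈ A, prodPmf P n x := by
  have hn := hπ.ne_zero
  obtain ⟨x, rfl⟩ := hπ.exists_empType_eq
  have hT : univ.filter (fun y : Fin n → α ↦ empType y = empType x) = typeClass x :=
    filter_congr fun y _ ↦ empType_eq_empType_iff hn
  rw [hT] at hA hcard
  set q := Real.exp (-n * klDiv (empType x) P) * prodPmf (empType x) n x
  have hq : 0 ≤ q := mul_nonneg (Real.exp_nonneg _) (prodPmf_nonneg empType_nonneg x)
  calc c * (((n : ℝ) + 1) ^ Fintype.card α)⁻¹ * Real.exp (-n * klDiv (empType x) P)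
      ≤ c * (∑ y ∈ typeClass x, prodPmf (empType x) n y) *
          Real.exp (-n * klDiv (empType x) P) := by
        gcongr
        exact inv_pow_le_sum_typeClass_prodPmf_empType hn x
    _ = c * #(typeClass x) * q := by
        rw [sum_prodPmf_of_subset_typeClass _ subset_rfl]; ring
    _ ≤ #A * q := by gcongr
    _ = ∑ y ∈ A, prodPmf P n y := by
        rw [sum_prodPmf_of_subset_typeClass _ hA, prodPmf_eq_exp_neg_mul_klDiv_mul hP.1 hsupp]

theorem prob_subset_type_class_ge {α : Type*} [Fintype α]
    (P : α → ℝ) (hP : IsPmf P) (n : ℕ) (hn : 1 ≤ n)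
    (π : α → ℝ) (hπ : IsType n π) (hsupp : ∀ a, P a = 0 → π a = 0)
    (A : Finset (Fin n → α))
    (hA : A ⊆ Finset.univ.filter (fun x : Fin n → α => empType x = π))
    (c : ℝ) (hc0 : 0 ≤ c) (hc1 : c ≤ 1)
    (hcard : c * ((Finset.univ.filter (fun x : Fin n → α => empType x = π)).card : ℝ)
      ≤ (A.card : ℝ)) :
    c * (((n : ℝ) + 1) ^ (Fintype.card α))⁻¹ * Real.exp (-(n : ℝ) * klDiv π P) ≤
      ∑ x ∈ A, prodPmf P n x :=
  prob_subset_type_class_ge_general P hP n π hπ hsupp A hA c hc0 hcard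
end
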